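/- arXiv:2410.21606 — 2 statements merged into one kernel-verified Lean document; each statement's English description precedes it below -/
import Mathlib

section
/- Let H₀ and H₁ be complex Hilbert spaces. Let (ιᵢ) be a net (indexed by a filter l) of isometric continuous linear maps H₀ → H₁ and ι an isometric continuous linear map H₀ → H₁ such that ιᵢ x → ι x for every x ∈ H₀ and adjoint(ιᵢ) y → adjoint(ι) y for every y ∈ H₁ (convergence in norm along l). Let (Tᵢ) be a net of continuous linear operators on H₀ converging in operator norm to a compact operator T on H₀. Then ‖ιᵢ ∘ Tᵢ ∘ adjoint(ιᵢ) − ι ∘ T ∘ adjoint(ι)‖ → 0 along l. In particular, the map sending an isometry ι to the conjugation operator Ad(ι) : T ↦ ι T ι* is continuous from the strong-* topology on isometries to the point-norm topology on maps between compact operators. -/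
open Filter ContinuousLinearMap

open Topology Metric
open scoped InnerProduct

/-!
Split `ιᵢ Tᵢ ιᵢ* - ι T ι*` as `ιᵢ (Tᵢ - T) ιᵢ* + (ιᵢ T - ι T) ιᵢ* + ι (T ιᵢ* - T ι*)`; all the
isometries are contractions, so it suffices that `ιᵢ T → ι T` and `T ιᵢ* → T ι*` in norm.
The first holds because a bounded net converging pointwise is equicontinuous, hence converges
uniformly on the compact closure of the image of the unit ball under `T`. The second reduces to
the first through the C*-identity `‖T A*‖² = ‖A T* T A*‖ ≤ ‖A (T* T)‖ ‖A‖`, applied to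
`A = ιᵢ - ι` and the compact operator `T* T`.
-/

theorem Equicontinuous.tendstoUniformlyOn_of_tendsto {ι X α : Type*} [TopologicalSpace X]
    [UniformSpace α] {F : ι → X → α} {f : X → α} {l : Filter ι} (hF : Equicontinuous F)
    (h : Tendsto F l (𝓝 f)) {s : Set X} (hs : IsCompact s) : TendstoUniformlyOn F f l s := by
  have : CompactSpace s := isCompact_iff_compactSpace.mp hs
  rw [tendstoUniformlyOn_iff_tendstoUniformly_comp_coe]
  exact UniformFun.tendsto_iff_tendstoUniformly.mp <|
    ((equicontinuous_restrict_iff F).mpr (hF.equicontinuousOn s)).tendsto_uniformFun_iff_pi l _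
      |>.mpr (tendsto_pi_nhds.mpr fun x => tendsto_pi_nhds.mp h x)

namespace ContinuousLinearMap

section Normed

variable {𝕜 D E F G : Type*} [NontriviallyNormedField 𝕜]
  [NormedAddCommGroup D] [NormedSpace 𝕜 D] [NormedAddCommGroup E] [NormedSpace 𝕜 E]
  [NormedAddCommGroup F] [NormedSpace 𝕜 F] [NormedAddCommGroup G] [NormedSpace 𝕜 G]

theorem tendsto_comp_of_isCompactOperator [NormedAlgebra ℝ 𝕜] {ι : Type*} {l : Filter ι}
    {S : ι → F →L[𝕜] G} {S₀ : F →L[𝕜] G} {C : ℝ} (hS : ∀ i, ‖S i‖ ≤ C)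
    (hS₀ : ∀ x, Tendsto (fun i => S i x) l (𝓝 (S₀ x))) {K : E →L[𝕜] F}
    (hK : IsCompactOperator K) : Tendsto (fun i => S i ∘L K) l (𝓝 (S₀ ∘L K)) := by
  have hequi : Equicontinuous fun i => ⇑(S i) :=
    (LipschitzWith.uniformEquicontinuous _ C.toNNReal fun i =>
      (S i).lipschitz.weaken (by simpa using Real.toNNReal_le_toNNReal (hS i))).equicontinuous
  have hunif := hequi.tendstoUniformlyOn_of_tendsto (tendsto_pi_nhds.mpr hS₀)
    (hK.isCompact_closure_image_closedBall 1)
  rw [Metric.tendsto_nhds]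
  intro ε hε
  filter_upwards [Metric.tendstoUniformlyOn_iff.mp hunif (ε / 2) (half_pos hε)] with i hi
  rw [dist_eq_norm]
  refine (opNorm_le_of_unit_norm (half_pos hε).le fun x hx => ?_).trans_lt (half_lt_self hε)
  have hKx : K x ∈ closure (K '' closedBall 0 1) :=
    subset_closure ⟨x, mem_closedBall_zero_iff.mpr hx.le, rfl⟩
  simpa [dist_eq_norm'] using (hi (K x) hKx).le

theorem norm_comp_comp_sub_comp_comp_le (A A₀ : F →L[𝕜] G) (T T₀ : E →L[𝕜] F)
    (B B₀ : D →L[𝕜] E) :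
    ‖A ∘L T ∘L B - A₀ ∘L T₀ ∘L B₀‖ ≤
      ‖A‖ * ‖T - T₀‖ * ‖B‖ + ‖A ∘L T₀ - A₀ ∘L T₀‖ * ‖B‖ + ‖A₀‖ * ‖T₀ ∘L B - T₀ ∘L B₀‖ := by
  have hsplit : A ∘L T ∘L B - A₀ ∘L T₀ ∘L B₀ =
      A ∘L (T - T₀) ∘L B + (A ∘L T₀ - A₀ ∘L T₀) ∘L B + A₀ ∘L (T₀ ∘L B - T₀ ∘L B₀) := by
    ext x
    simp only [comp_apply, sub_apply, add_apply, map_sub]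
    abel
  rw [hsplit]
  refine (norm_add₃_le ..).trans (add_le_add_three ?_ ?_ ?_)
  · exact (opNorm_comp_le _ _).trans (by rw [mul_assoc]; gcongr; exact opNorm_comp_le _ _)
  · exact opNorm_comp_le _ _
  · exact opNorm_comp_le _ _

end Normed

section InnerProduct

variable {𝕜 E F G : Type*} [RCLike 𝕜]
  [NormedAddCommGroup E] [InnerProductSpace 𝕜 E] [CompleteSpace E]
  [NormedAddCommGroup F] [InnerProductSpace 𝕜 F] [CompleteSpace F]
  [NormedAddCommGroup G] [InnerProductSpace 𝕜 G] [CompleteSpace G]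

theorem norm_comp_adjoint_sq_le (K : E →L[𝕜] G) (B : E →L[𝕜] F) :
    ‖K ∘L B†‖ ^ 2 ≤ ‖B ∘L (K† ∘L K)‖ * ‖B‖ := by
  calc ‖K ∘L B†‖ ^ 2 = ‖(B ∘L (K† ∘L K)) ∘L B†‖ := by
        rw [sq, ← norm_adjoint_comp_self, adjoint_comp, adjoint_adjoint]; rfl
    _ ≤ ‖B ∘L (K† ∘L K)‖ * ‖B‖ := by
        rw [← adjoint.norm_map B]; exact opNorm_comp_le _ _

theorem tendsto_comp_adjoint_of_isCompactOperator {ι : Type*} {l : Filter ι}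
    {A : ι → E →L[𝕜] F} {A₀ : E →L[𝕜] F} {C : ℝ} (hA : ∀ i, ‖A i‖ ≤ C)
    (hA₀ : ∀ x, Tendsto (fun i => A i x) l (𝓝 (A₀ x))) {K : E →L[𝕜] G}
    (hK : IsCompactOperator K) : Tendsto (fun i => K ∘L (A i)†) l (𝓝 (K ∘L A₀†)) := by
  have hKK : Tendsto (fun i => ‖(A i - A₀) ∘L (K† ∘L K)‖ * (C + ‖A₀‖)) l (𝓝 0) := by
    simpa only [sub_comp, zero_mul] using (tendsto_iff_norm_sub_tendsto_zero.mp
      (tendsto_comp_of_isCompactOperator hA hA₀ (hK.clm_comp (K†)))).mul_const (C + ‖A₀‖)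
  rw [tendsto_iff_norm_sub_tendsto_zero]
  refine squeeze_zero (fun _ => norm_nonneg _) (fun i => ?_)
    (by simpa only [Real.sqrt_zero] using hKK.sqrt)
  rw [← comp_sub, ← map_sub]
  refine Real.le_sqrt_of_sq_le ((norm_comp_adjoint_sq_le K _).trans ?_)
  gcongr
  exact (norm_sub_le _ _).trans (add_le_add_left (hA i) _)

end InnerProduct

end ContinuousLinearMap

theorem tendsto_conj_of_strongStar_tendsto_general
    {H₀ H₁ : Type*} [NormedAddCommGroup H₀] [InnerProductSpace ℂ H₀] [CompleteSpace H₀]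
    [NormedAddCommGroup H₁] [InnerProductSpace ℂ H₁] [CompleteSpace H₁]
    {I : Type*} (l : Filter I)
    (ι : I → (H₀ →L[ℂ] H₁)) (ι₀ : H₀ →L[ℂ] H₁)
    (hisom : ∀ i, ∀ x : H₀, ‖ι i x‖ = ‖x‖) (hisom₀ : ∀ x : H₀, ‖ι₀ x‖ = ‖x‖)
    (hfwd : ∀ x : H₀, Tendsto (fun i => ι i x) l (nhds (ι₀ x)))
    (T : I → (H₀ →L[ℂ] H₀)) (T₀ : H₀ →L[ℂ] H₀) (hT₀ : IsCompactOperator T₀)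
    (hT : Tendsto T l (nhds T₀)) :
    Tendsto (fun i => ‖(ι i).comp ((T i).comp (adjoint (ι i))) -
      ι₀.comp (T₀.comp (adjoint ι₀))‖) l (nhds 0) := by
  have hι : ∀ i, ‖ι i‖ ≤ 1 := fun i =>
    opNorm_le_bound _ zero_le_one fun x => (hisom i x).trans_le (one_mul _).ge
  have hι₀ : ‖ι₀‖ ≤ 1 := opNorm_le_bound _ zero_le_one fun x => (hisom₀ x).trans_le (one_mul _).ge
  have hleft := tendsto_comp_of_isCompactOperator hι hfwd hT₀
  have hright := tendsto_comp_adjoint_of_isCompactOperator hι hfwd hT₀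
  have hsum := ((tendsto_iff_norm_sub_tendsto_zero.mp hT).add
    (tendsto_iff_norm_sub_tendsto_zero.mp hleft)).add (tendsto_iff_norm_sub_tendsto_zero.mp hright)
  rw [add_zero, add_zero] at hsum
  refine squeeze_zero (fun _ => norm_nonneg _) (fun i => ?_) hsum
  have hιi : ‖ι i‖ ≤ 1 := hι i
  have hιi_adjoint : ‖(ι i)†‖ ≤ 1 := by rwa [adjoint.norm_map]
  calc _ ≤ _ := norm_comp_comp_sub_comp_comp_le _ _ _ _ _ _
    _ ≤ 1 * ‖T i - T₀‖ * 1 + ‖ι i ∘L T₀ - ι₀ ∘L T₀‖ * 1 + 1 * ‖T₀ ∘L (ι i)† - T₀ ∘L ι₀†‖ := by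
        gcongr
    _ = _ := by ring

/-- If a net of isometric continuous linear maps `ι i : H₀ → H₁` converges
strong-* (i.e. pointwise in norm, together with the adjoints) to an isometric `ι₀`, and a net
of operators `T i` on `H₀` converges in operator norm to a compact operator `T₀`, then
`ι i ∘ T i ∘ (ι i)* → ι₀ ∘ T₀ ∘ ι₀*` in operator norm.  In particular `Ad` is continuous from
the strong-* topology on isometries to the point-norm topology on compact operators. -/
theorem tendsto_conj_of_strongStar_tendsto
    {H₀ H₁ : Type*} [NormedAddCommGroup H₀] [InnerProductSpace ℂ H₀] [CompleteSpace H₀]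
    [NormedAddCommGroup H₁] [InnerProductSpace ℂ H₁] [CompleteSpace H₁]
    {I : Type*} (l : Filter I)
    (ι : I → (H₀ →L[ℂ] H₁)) (ι₀ : H₀ →L[ℂ] H₁)
    (hisom : ∀ i, ∀ x : H₀, ‖ι i x‖ = ‖x‖) (hisom₀ : ∀ x : H₀, ‖ι₀ x‖ = ‖x‖)
    (hfwd : ∀ x : H₀, Tendsto (fun i => ι i x) l (nhds (ι₀ x)))
    (hadj : ∀ y : H₁, Tendsto (fun i => adjoint (ι i) y) l (nhds (adjoint ι₀ y)))
    (T : I → (H₀ →L[ℂ] H₀)) (T₀ : H₀ →L[ℂ] H₀) (hT₀ : IsCompactOperator T₀)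
    (hT : Tendsto T l (nhds T₀)) :
    Tendsto (fun i => ‖(ι i).comp ((T i).comp (adjoint (ι i))) -
      ι₀.comp (T₀.comp (adjoint ι₀))‖) l (nhds 0) :=
  tendsto_conj_of_strongStar_tendsto_general l ι ι₀ hisom hisom₀ hfwd T T₀ hT₀ hT
end

section
/- For f : ℝ → ℝ define (R f)(x) = x·f(x) − f′(x); let f₀(x) = exp(−x²/2) and fₙ = Rⁿf₀ (the n-fold iterate of R applied to f₀). Then the functions fₙ are pairwise orthogonal in L²(ℝ): for all m ≠ n, ∫_ℝ fₘ(x)·fₙ(x) dx = 0 (integral with respect to Lebesgue measure). -/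
open MeasureTheory

/-- The raising operator `(R f)(x) = x · f(x) − f′(x)`. -/
noncomputable def raiseOp (f : ℝ → ℝ) : ℝ → ℝ := fun x => x * f x - deriv f x

/-- The Gaussian ground state `f₀(x) = exp(−x²/2)`. -/
noncomputable def gauss : ℝ → ℝ := fun x => Real.exp (-x ^ 2 / 2)

/-!
Since `gauss' = -x · gauss`, the raising operator maps `Q · gauss` to `(2XQ - Q') · gauss`, so
`fₙ = Hₙ · gauss` with `Hₙ` the physicists' Hermite polynomial of degree `≤ n`, and
`∫ fₘ fₙ = ∫ Hₘ Hₙ e^{-x²}`. Against the weight `e^{-x²}` the map `B ↦ 2XB - B'` is adjoint to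
differentiation, `∫ A (2XB - B') e^{-x²} = ∫ A' B e^{-x²}`, because
`(AB e^{-x²})' = (A'B + AB' - 2XAB) e^{-x²}` integrates to zero. Moving all `n` raisings of `Hₙ`
onto `Hₘ` differentiates it `n > m` times, which kills it.
-/

open Polynomial Real

noncomputable def polyRaise (Q : ℝ[X]) : ℝ[X] := 2 * X * Q - derivative Q

lemma natDegree_polyRaise_le (Q : ℝ[X]) : (polyRaise Q).natDegree ≤ Q.natDegree + 1 := by
  refine (natDegree_sub_le _ _).trans (max_le ?_ ?_)
  · refine natDegree_mul_le.trans ?_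
    have : (2 * X : ℝ[X]).natDegree ≤ 1 := natDegree_mul_le.trans (by simp)
    omega
  · exact (natDegree_derivative_le Q).trans (by omega)

lemma natDegree_iterate_polyRaise_one_le (n : ℕ) : (polyRaise^[n] 1).natDegree ≤ n := by
  induction n with
  | zero => simp
  | succ n ih =>
    rw [Function.iterate_succ_apply']
    exact (natDegree_polyRaise_le _).trans (by omega)

lemma hasDerivAt_gauss (x : ℝ) : HasDerivAt gauss (-x * gauss x) x := by
  have h : HasDerivAt (fun x : ℝ => -x ^ 2 / 2) (-x) x := by
    refine ((hasDerivAt_pow 2 x).fun_neg.div_const 2).congr_deriv ?_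
    norm_num
    ring
  unfold gauss
  simpa [mul_comm] using h.exp

lemma raiseOp_eval_mul_gauss (Q : ℝ[X]) :
    raiseOp (fun x => Q.eval x * gauss x) = fun x => (polyRaise Q).eval x * gauss x := by
  funext x
  rw [raiseOp, ((Q.hasDerivAt x).fun_mul (hasDerivAt_gauss x)).deriv]
  simp only [polyRaise, eval_sub, eval_mul, eval_ofNat, eval_X]
  ring

lemma iterate_raiseOp_gauss (n : ℕ) :
    raiseOp^[n] gauss = fun x => (polyRaise^[n] 1).eval x * gauss x := by
  induction n with
  | zero => funext x; simp
  | succ n ih => rw [Function.iterate_succ_apply', ih, raiseOp_eval_mul_gauss,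
      Function.iterate_succ_apply']

lemma gauss_mul_gauss (x : ℝ) : gauss x * gauss x = exp (-x ^ 2) := by
  rw [gauss, ← exp_add]
  ring_nf

lemma integrable_eval_mul_exp_neg_mul_sq {b : ℝ} (hb : 0 < b) (Q : ℝ[X]) :
    Integrable fun x => Q.eval x * exp (-b * x ^ 2) := by
  induction Q using Polynomial.induction_on' with
  | add p q hp hq => simpa only [eval_add, add_mul] using hp.fun_add hq
  | monomial n c =>
    have h := (integrable_rpow_mul_exp_neg_mul_sq hb (s := n) (by linarith [n.cast_nonneg (α := ℝ)])).const_mul c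
    simpa only [eval_monomial, rpow_natCast, mul_assoc] using h

lemma hasDerivAt_eval_mul_exp_neg_sq (Q : ℝ[X]) (x : ℝ) :
    HasDerivAt (fun x => Q.eval x * exp (-x ^ 2))
      ((derivative Q - 2 * X * Q).eval x * exp (-x ^ 2)) x := by
  have h : HasDerivAt (fun x : ℝ => -x ^ 2) (-(2 * x)) x := by
    simpa using (hasDerivAt_pow 2 x).fun_neg
  refine ((Q.hasDerivAt x).fun_mul h.exp).congr_deriv ?_
  simp only [eval_sub, eval_mul, eval_ofNat, eval_X]
  ring

lemma integral_eval_mul_polyRaise (A B : ℝ[X]) :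
    ∫ x, A.eval x * (polyRaise B).eval x * exp (-x ^ 2)
      = ∫ x, (derivative A).eval x * B.eval x * exp (-x ^ 2) := by
  have hint (Q : ℝ[X]) : Integrable fun x => Q.eval x * exp (-x ^ 2) := by
    simpa using integrable_eval_mul_exp_neg_mul_sq one_pos Q
  have hboundary : ∫ x, (derivative (A * B) - 2 * X * (A * B)).eval x * exp (-x ^ 2) = 0 :=
    integral_eq_zero_of_hasDerivAt_of_integrable (hasDerivAt_eval_mul_exp_neg_sq (A * B))
      (hint _) (hint _)
  calc ∫ x, A.eval x * (polyRaise B).eval x * exp (-x ^ 2)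
      = ∫ x, (derivative A * B).eval x * exp (-x ^ 2)
          - (derivative (A * B) - 2 * X * (A * B)).eval x * exp (-x ^ 2) := by
        congr 1 with x
        simp only [polyRaise, derivative_mul, eval_sub, eval_add, eval_mul, eval_ofNat, eval_X]
        ring
    _ = ∫ x, (derivative A).eval x * B.eval x * exp (-x ^ 2) := by
        rw [integral_sub (hint _) (hint _), hboundary, sub_zero]
        simp only [eval_mul]

lemma integral_eval_mul_iterate_polyRaise_eq_zero {n : ℕ} {A : ℝ[X]}
    (hA : derivative^[n] A = 0) (B : ℝ[X]) :
    ∫ x, A.eval x * (polyRaise^[n] B).eval x * exp (-x ^ 2) = 0 := by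
  induction n generalizing A with
  | zero => simp [show A = 0 from hA]
  | succ n ih =>
    rw [Function.iterate_succ_apply', integral_eval_mul_polyRaise]
    exact ih hA

lemma integral_iterate_raiseOp_gauss_mul (m n : ℕ) :
    ∫ x, raiseOp^[m] gauss x * raiseOp^[n] gauss x
      = ∫ x, (polyRaise^[m] 1).eval x * (polyRaise^[n] 1).eval x * exp (-x ^ 2) := by
  simp only [iterate_raiseOp_gauss, mul_mul_mul_comm _ (gauss _), gauss_mul_gauss]

/-- The functions `fₙ = Rⁿ f₀` are pairwise orthogonal in `L²(ℝ)`: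
for `m ≠ n`, `∫ fₘ(x) · fₙ(x) dx = 0`. -/
theorem iterate_raiseOp_gauss_orthogonal (m n : ℕ) (hmn : m ≠ n) :
    ∫ x : ℝ, (raiseOp^[m] gauss x) * (raiseOp^[n] gauss x) = 0 := by
  wlog hlt : m < n generalizing m n
  · simp_rw [mul_comm (raiseOp^[m] gauss _)]
    exact this n m hmn.symm (by omega)
  rw [integral_iterate_raiseOp_gauss_mul]
  exact integral_eval_mul_iterate_polyRaise_eq_zero
    (iterate_derivative_eq_zero ((natDegree_iterate_polyRaise_one_le m).trans_lt hlt)) _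
end
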